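/- Let 𝔤 be a Lie algebra over ℝ whose underlying vector space carries a real inner product ⟨·,·⟩, and let E ∈ 𝔤 satisfy the parallelism identity ⟨[Y,E],Z⟩ − ⟨[Z,Y],E⟩ + ⟨[Z,E],Y⟩ = 0 for all Y,Z ∈ 𝔤. If moreover [E,[Y,Z]] = 0 for all Y,Z ∈ 𝔤 (i.e. ad E vanishes on the derived algebra [𝔤,𝔤]), then E lies in the center of 𝔤, i.e. [E,Y] = 0 for all Y ∈ 𝔤. -/

import Mathlib

open scoped RealInnerProductSpace

/-- Lie-ring sum (used to force the `LieRing` additive structure, which in the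
statement below is a priori unrelated to the normed one). -/
def lsum {g : Type*} [LieRing g] (a b : g) : g := a + b

section Aux

variable {g : Type*} [LieRing g] {E c : g}

lemma aux_c_eq_zero (hc : ∀ Y Z : g, ⁅E, ⁅Y, Z⁆⁆ = c) : c = 0 := by
  have h := hc E E
  simp at h
  exact h.symm

lemma aux_self (hc : ∀ Y Z : g, ⁅E, ⁅Y, Z⁆⁆ = c) (Z : g) : ⁅Z, Z⁆ = c := by
  rw [aux_c_eq_zero hc, lie_self]

lemma aux_bracket_E (hc : ∀ Y Z : g, ⁅E, ⁅Y, Z⁆⁆ = c) (A B : g) :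
    ⁅⁅A, B⁆, E⁆ = c := by
  have h := hc A B
  rw [aux_c_eq_zero hc] at h ⊢
  rw [← lie_skew, h, neg_zero]

lemma aux_lsum_E (hc : ∀ Y Z : g, ⁅E, ⁅Y, Z⁆⁆ = c) (Y : g) :
    ⁅lsum ⁅Y, E⁆ Y, E⁆ = ⁅Y, E⁆ := by
  have h := aux_bracket_E hc Y E
  rw [aux_c_eq_zero hc] at h
  rw [lsum, add_lie, h, zero_add]

lemma aux_lsum_Y (Y E : g) : ⁅lsum ⁅Y, E⁆ Y, Y⁆ = ⁅⁅Y, E⁆, Y⁆ := by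
  rw [lsum, add_lie, lie_self, add_zero]

lemma aux_goal (hc : ∀ Y Z : g, ⁅E, ⁅Y, Z⁆⁆ = c) {Y : g}
    (hx : ⁅Y, E⁆ = c) : ⁅E, Y⁆ = c := by
  rw [aux_c_eq_zero hc] at hx ⊢
  rw [← lie_skew, hx, neg_zero]

end Aux

/-- If `E` satisfies the parallelism identity and `ad E` vanishes on the derived
algebra, then `E` is central. -/
theorem stmt1 {g : Type*} [NormedAddCommGroup g] [InnerProductSpace ℝ g]
    [LieRing g] [LieAlgebra ℝ g] (E : g)
    (hpar : ∀ Y Z : g, ⟪⁅Y, E⁆, Z⟫ - ⟪⁅Z, Y⁆, E⟫ + ⟪⁅Z, E⁆, Y⟫ = 0)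
    (hder : ∀ Y Z : g, ⁅E, ⁅Y, Z⁆⁆ = 0) :
    ∀ Y : g, ⁅E, Y⁆ = 0 := by
  intro Y
  have f0 := hpar ⁅E, E⁆ E
  rw [aux_bracket_E hder E E, hder E E] at f0
  have hEE := (inner_self_eq_zero (𝕜 := ℝ) (x := ⁅E, E⁆)).mp (by linarith)
  have hder2 : ∀ Y Z : g, ⁅E, ⁅Y, Z⁆⁆ = ⁅E, E⁆ := fun Y Z => (hder Y Z).trans (lie_self E).symm
  rw [hEE] at hder2
  -- `⟪⁅Y,E⁆, Y⟫ = 0`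
  have f1 := hpar Y Y
  rw [aux_self hder2 Y, inner_zero_left] at f1
  have hxY : ⟪⁅Y, E⁆, Y⟫ = (0 : ℝ) := by linarith
  -- `⟪⁅Y,E⁆, u⟫ = 0` where `u` is the Lie sum `⁅Y,E⁆ + Y`
  have f2 := hpar (lsum ⁅Y, E⁆ Y) (lsum ⁅Y, E⁆ Y)
  rw [aux_self hder2 (lsum ⁅Y, E⁆ Y), inner_zero_left, aux_lsum_E hder2 Y] at f2
  have hxu : ⟪⁅Y, E⁆, lsum ⁅Y, E⁆ Y⟫ = (0 : ℝ) := by linarith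
  -- `⟪⁅⁅Y,E⁆,Y⁆, E⟫ = 0`
  have f3 := hpar Y (lsum ⁅Y, E⁆ Y)
  rw [aux_lsum_Y Y E, aux_lsum_E hder2 Y, hxu, hxY] at f3
  -- `⟪⁅Y,E⁆, ⁅Y,E⁆⟫ = 0`
  have f4 := hpar Y ⁅Y, E⁆
  rw [aux_bracket_E hder2 Y E, inner_zero_left] at f4
  have hxx : ⟪⁅Y, E⁆, ⁅Y, E⁆⟫ = (0 : ℝ) := by linarith
  exact aux_goal hder ((inner_self_eq_zero.mp hxx).trans (hEE.symm.trans (lie_self E)))
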